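/- Let λ ∈ ℝ with 0 < |λ| < π/2, μ = e^{iλ} cos λ, a, b ∈ ℂ, c = a+b+1. For s ∈ ℝ put σ = μ(is-1), A = σ(σ+c-1), B = (σ+a)(σ+b), τ₁ = μ(s²+1)/2. Then |A|² - |B|² - 2 Re[(A-B)·conj(τ₁)] = cos λ · (L s² - 2 M s + N), where L = Re[e^{-iλ} a b (2 + e^{-2iλ})], M = Im[e^{-iλ} a b (conj(a)+conj(b) - 2 e^{-iλ} cos λ)], and N = Re[e^{-iλ} a b (2conj(a) + 2conj(b) - e^{-2iλ} - e^{iλ} conj(a) conj(b)/cos λ)]. -/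

import Mathlib

/-!
Since `c = a + b + 1`, the difference `B - A = a * b` does not depend on `s`, and the left side
collapses to `-Re[a b · conj(a b + 2 (A - τ₁))]`. With `conj (e^{iλ}) = e^{-iλ}` and
`cos λ = (1 + e^{2iλ}) / (2 e^{iλ})` (i.e. `2μ = 1 + e^{2iλ}`), both sides become the real part of
the same rational expression in `e^{iλ}`, `a`, `b`, `conj a`, `conj b` and `s`.
-/

open Complex Real ComplexConjugate

theorem sq_norm_sub_sq_norm_sub_re_mul_conj (A B τ : ℂ) :
    ‖A‖ ^ 2 - ‖B‖ ^ 2 - 2 * ((A - B) * conj τ).re =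
      (-(B - A) * conj (B - A + 2 * (A - τ))).re := by
  simp only [Complex.sq_norm, normSq_apply, mul_re, mul_im, sub_re, sub_im, neg_re, neg_im, conj_re,
    conj_im, add_re, add_im, re_ofNat, im_ofNat]
  ring

theorem re_ofReal_mul_quadratic (r t : ℝ) (X Y Z : ℂ) :
    (r * (X * t ^ 2 + 2 * I * Y * t + Z)).re = r * (X.re * t ^ 2 - 2 * Y.im * t + Z.re) := by
  simp only [← ofReal_pow, mul_re, mul_im, add_re, add_im, ofReal_re, ofReal_im, I_re, I_im,
    re_ofNat, im_ofNat]
  ring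

theorem conj_exp_ofReal_mul_I (x : ℝ) : conj (exp (x * I)) = (exp (x * I))⁻¹ := by
  rw [← exp_conj, ← Complex.exp_neg, map_mul, conj_ofReal, conj_I, mul_neg]

theorem ofReal_cos_eq_one_add_exp_sq_div (x : ℝ) :
    (Real.cos x : ℂ) = (1 + exp (x * I) ^ 2) / (2 * exp (x * I)) := by
  rw [ofReal_cos, Complex.cos, neg_mul, Complex.exp_neg]
  field_simp
  ring

theorem spirallike_quadratic_identity_general (lam : ℝ) (hlam : |lam| < π/2)
    (μ : ℂ) (hμ : μ = Complex.exp ((lam:ℂ) * Complex.I) * (Real.cos lam : ℂ))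
    (a b c : ℂ) (hc : c = a + b + 1) (s : ℝ)
    (σ A B τ₁ : ℂ)
    (hσ : σ = μ * (Complex.I * s - 1))
    (hA : A = σ * (σ + c - 1)) (hB : B = (σ + a) * (σ + b))
    (hτ : τ₁ = μ * ((s : ℂ) ^ 2 + 1) / 2) :
    ‖A‖ ^ 2 - ‖B‖ ^ 2 - 2 * ((A - B) * (starRingEnd ℂ) τ₁).re =
      Real.cos lam *
        ((Complex.exp (-(lam:ℂ) * Complex.I) * a * b *
            (2 + Complex.exp (-(2*lam:ℂ) * Complex.I))).re * s ^ 2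
        - 2 * (Complex.exp (-(lam:ℂ) * Complex.I) * a * b *
            ((starRingEnd ℂ) a + (starRingEnd ℂ) b -
              2 * Complex.exp (-(lam:ℂ) * Complex.I) * (Real.cos lam : ℂ))).im * s
        + (Complex.exp (-(lam:ℂ) * Complex.I) * a * b *
            (2 * (starRingEnd ℂ) a + 2 * (starRingEnd ℂ) b -
              Complex.exp (-(2*lam:ℂ) * Complex.I) -
              Complex.exp ((lam:ℂ) * Complex.I) * (starRingEnd ℂ) a * (starRingEnd ℂ) b /
                (Real.cos lam : ℂ))).re) := by
  have hcos : (Real.cos lam : ℂ) ≠ 0 :=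
    ofReal_ne_zero.2 (Real.cos_pos_of_mem_Ioo (abs_lt.1 hlam)).ne'
  have hBA : B - A = a * b := by rw [hA, hB, hc]; ring
  have hexp1 : exp (-(lam : ℂ) * I) = (exp (lam * I))⁻¹ := by rw [neg_mul, Complex.exp_neg]
  have hexp2 : exp (-(2 * lam : ℂ) * I) = (exp (lam * I))⁻¹ ^ 2 := by
    rw [← Complex.exp_neg, ← Complex.exp_nat_mul]; ring_nf
  have he2 : 1 + exp (lam * I) ^ 2 ≠ 0 := by
    rw [ofReal_cos_eq_one_add_exp_sq_div] at hcos; exact (div_ne_zero_iff.1 hcos).1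
  rw [sq_norm_sub_sq_norm_sub_re_mul_conj, hBA, ← re_ofReal_mul_quadratic]
  congr 1
  subst hA hσ hτ hμ hc
  rw [hexp1, hexp2]
  simp only [map_add, map_sub, map_mul, map_div₀, map_ofNat, map_one, map_pow, conj_ofReal,
    conj_I, conj_exp_ofReal_mul_I]
  rw [ofReal_cos_eq_one_add_exp_sq_div]
  field_simp
  linear_combination (-(a * b) * s ^ 2 * (1 + exp (lam * I) ^ 2) ^ 2) * I_sq

/-- The key quadratic identity in the proof of the spirallikeness criterion
(case `c = a + b + 1`). -/
theorem spirallike_quadratic_identity (lam : ℝ) (hlam0 : 0 < |lam|) (hlam : |lam| < π/2)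
    (μ : ℂ) (hμ : μ = Complex.exp ((lam:ℂ) * Complex.I) * (Real.cos lam : ℂ))
    (a b c : ℂ) (hc : c = a + b + 1) (s : ℝ)
    (σ A B τ₁ : ℂ)
    (hσ : σ = μ * (Complex.I * s - 1))
    (hA : A = σ * (σ + c - 1)) (hB : B = (σ + a) * (σ + b))
    (hτ : τ₁ = μ * ((s : ℂ) ^ 2 + 1) / 2) :
    ‖A‖ ^ 2 - ‖B‖ ^ 2 - 2 * ((A - B) * (starRingEnd ℂ) τ₁).re =
      Real.cos lam *
        ((Complex.exp (-(lam:ℂ) * Complex.I) * a * b *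
            (2 + Complex.exp (-(2*lam:ℂ) * Complex.I))).re * s ^ 2
        - 2 * (Complex.exp (-(lam:ℂ) * Complex.I) * a * b *
            ((starRingEnd ℂ) a + (starRingEnd ℂ) b -
              2 * Complex.exp (-(lam:ℂ) * Complex.I) * (Real.cos lam : ℂ))).im * s
        + (Complex.exp (-(lam:ℂ) * Complex.I) * a * b *
            (2 * (starRingEnd ℂ) a + 2 * (starRingEnd ℂ) b -
              Complex.exp (-(2*lam:ℂ) * Complex.I) -
              Complex.exp ((lam:ℂ) * Complex.I) * (starRingEnd ℂ) a * (starRingEnd ℂ) b /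
                (Real.cos lam : ℂ))).re) :=
  spirallike_quadratic_identity_general lam hlam μ hμ a b c hc s σ A B τ₁ hσ hA hB hτ
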